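/- Let n be odd, s ≥ 1, and 4s ≤ n + 1. Then for every v ∈ V_{n,s}: q_{n,s}(v_{n,s} − w_{n,s} − v) ≥ (n+1)/4 and q_{n,s}(v_{n,s} − w_{n,s} − t_{n,s} − v) ≥ (n+1)/4. Consequently, every point of the coset w_{n,s} + V²_{n,s} is at squared q_{n,s}-distance at least (n+1)/4 from v_{n,s}. -/

import Mathlib

open Finset

noncomputable section

/-- The lattice `A_n = {x ∈ ℤ^{n+1} : Σ x_i = 0}`, viewed inside `ℝ^{n+1}`. -/
def latticeA (n : ℕ) : Set (Fin (n+1) → ℝ) :=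
  {x | (∀ i, ∃ m : ℤ, x i = m) ∧ ∑ i, x i = 0}

/-- The point lattice `V_{n,s} = {x ∈ ℤ^{n+1} : Σ x_i = s}`. -/
def Vset (n s : ℕ) : Set (Fin (n+1) → ℝ) :=
  {x | (∀ i, ∃ m : ℤ, x i = m) ∧ ∑ i, x i = (s : ℝ)}

/-- The vertex set `W(n+1,s) = {x ∈ {0,1}^{n+1} : Σ x_i = s}`. -/
def Wset (n s : ℕ) : Set (Fin (n+1) → ℝ) :=
  {x | (∀ i, x i = 0 ∨ x i = 1) ∧ ∑ i, x i = (s : ℝ)}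

/-- The vector `v_{n,s} = ((1/4)^{4s}; 0^{n+1-4s})`. -/
def vns (n s : ℕ) : Fin (n+1) → ℝ := fun i => if (i : ℕ) < 4 * s then 1 / 4 else 0

/-- The vector `t_{n,s} = ((1/2)^{2s}; (−1/2)^{2s}; 0^{n+1-4s})`. -/
def tns (n s : ℕ) : Fin (n+1) → ℝ := fun i =>
  if (i : ℕ) < 2 * s then 1 / 2 else if (i : ℕ) < 4 * s then -(1 / 2) else 0

/-- The point lattice `V²_{n,s} = V_{n,s} ∪ (t_{n,s} + V_{n,s})`. -/
def V2 (n s : ℕ) : Set (Fin (n+1) → ℝ) :=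
  Vset n s ∪ (fun x => tns n s + x) '' Vset n s

/-- The vertex set `S(n,s) = W(n+1,s) ∪ {2v_{n,s} − v : v ∈ W(n+1,s)}`
of the polytope `P(n,s)`. -/
def Sns (n s : ℕ) : Set (Fin (n+1) → ℝ) :=
  Wset n s ∪ (fun v => (2 : ℝ) • vns n s - v) '' Wset n s

/-- The quadratic form `q_{n,s}(x) = 2 Σ_{i<4s} x_i² + Σ_{i≥4s} x_i²`. -/
def qns (n s : ℕ) (x : Fin (n+1) → ℝ) : ℝ :=
  ∑ i : Fin (n+1), (if (i : ℕ) < 4 * s then (2:ℝ) else 1) * (x i) ^ 2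

/-- The standard basis vector `e_1` (1 in coordinate index 1). -/
def e1 (n : ℕ) : Fin (n+1) → ℝ := fun i => if (i : ℕ) = 1 then 1 else 0

/-- For `n` odd, the vector
`w_{n,s} = ((1/4)^{2s}; (−1/4)^{2s}; (1/2)^{n+1−4s}) − ((n+1−4s)/2)·e_1`. -/
def wOdd (n s : ℕ) : Fin (n+1) → ℝ := fun i =>
  (if (i : ℕ) < 2 * s then 1 / 4
   else if (i : ℕ) < 4 * s then -(1 / 4) else 1 / 2)
  - (((n : ℝ) + 1 - 4 * s) / 2) * e1 n i

/-- For `n` even, the vector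
`w_{n,s} = ((1/4)^{2s}; (−1/4)^{2s}; 0; (1/2)^{n−4s}) − ((n−4s)/2)·e_1`. -/
def wEven (n s : ℕ) : Fin (n+1) → ℝ := fun i =>
  (if (i : ℕ) < 2 * s then 1 / 4
   else if (i : ℕ) < 4 * s then -(1 / 4)
   else if (i : ℕ) = 4 * s then 0 else 1 / 2)
  - (((n : ℝ) - 4 * s) / 2) * e1 n i

/-!
For odd `n` the coefficient `(n+1-4s)/2` of `e₁` in `w_{n,s}` is an integer, so modulo `ℤ^{n+1}`
the vector `v_{n,s} - w_{n,s}` is `(0^{2s}; (1/2)^{n+1-2s})`, and subtracting `t_{n,s}` turns it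
into `((1/2)^{2s}; 0^{2s}; (1/2)^{n+1-4s})`. A half-integer has square at least `1/4`, and in both
patterns the half-integer coordinates carry total `q_{n,s}`-weight `n+1`.
-/

theorem one_div_four_le_sq_int_add_half (m : ℤ) : 1 / 4 ≤ ((m : ℝ) + 1 / 2) ^ 2 := by
  have hm : 0 ≤ m * (m + 1) := by
    rcases le_or_gt 0 m with h | h
    · positivity
    · nlinarith
  have hm' : (0 : ℝ) ≤ m * (m + 1) := by exact_mod_cast hm
  nlinarith

section Blocks

variable {n s : ℕ}

theorem sum_ite_blocks (h4s : 4 * s ≤ n + 1) (a b c : ℝ) :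
    ∑ i : Fin (n + 1), (if (i : ℕ) < 2 * s then a else if (i : ℕ) < 4 * s then b else c)
      = 2 * s * a + 2 * s * b + ((n : ℝ) + 1 - 4 * s) * c := by
  rw [Fin.sum_univ_eq_sum_range (fun i => if i < 2 * s then a else if i < 4 * s then b else c),
    range_eq_Ico, ← sum_Ico_consecutive _ (Nat.zero_le _) h4s,
    ← sum_Ico_consecutive _ (Nat.zero_le _) (by omega : 2 * s ≤ 4 * s)]
  have h₁ : ∑ i ∈ Ico 0 (2 * s), (if i < 2 * s then a else if i < 4 * s then b else c)
      = ∑ i ∈ Ico 0 (2 * s), a :=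
    sum_congr rfl fun i hi => if_pos (mem_Ico.1 hi).2
  have h₂ : ∑ i ∈ Ico (2 * s) (4 * s), (if i < 2 * s then a else if i < 4 * s then b else c)
      = ∑ i ∈ Ico (2 * s) (4 * s), b :=
    sum_congr rfl fun i hi => by
      rw [mem_Ico] at hi
      rw [if_neg (by omega), if_pos hi.2]
  have h₃ : ∑ i ∈ Ico (4 * s) (n + 1), (if i < 2 * s then a else if i < 4 * s then b else c)
      = ∑ i ∈ Ico (4 * s) (n + 1), c :=
    sum_congr rfl fun i hi => by
      rw [mem_Ico] at hi
      rw [if_neg (by omega), if_neg (by omega)]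
  rw [h₁, h₂, h₃]
  simp only [sum_const, Nat.card_Ico, Nat.sub_zero, nsmul_eq_mul]
  rw [Nat.cast_sub h4s, Nat.cast_sub (by omega : 2 * s ≤ 4 * s)]
  push_cast
  ring

theorem le_qns_of_le_blocks (h4s : 4 * s ≤ n + 1) {a b c : ℝ} {x : Fin (n + 1) → ℝ}
    (hx : ∀ i : Fin (n + 1), (if (i : ℕ) < 2 * s then a else if (i : ℕ) < 4 * s then b else c)
      ≤ (if (i : ℕ) < 4 * s then (2 : ℝ) else 1) * x i ^ 2) :
    2 * s * a + 2 * s * b + ((n : ℝ) + 1 - 4 * s) * c ≤ qns n s x := by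
  rw [← sum_ite_blocks h4s]
  exact sum_le_sum fun i _ => hx i

theorem exists_int_vns_sub_wOdd_sub (hodd : Odd n) {v : Fin (n + 1) → ℝ}
    (hv : ∀ i, ∃ m : ℤ, v i = m) :
    ∃ m : Fin (n + 1) → ℤ, ∀ i : Fin (n + 1),
      (vns n s - wOdd n s - v) i = m i + if (i : ℕ) < 2 * s then 0 else 1 / 2 := by
  obtain ⟨k, rfl⟩ := hodd
  choose z hz using hv
  refine ⟨fun i => (k + 1 - 2 * s) * (if (i : ℕ) = 1 then 1 else 0) - z i
    - (if (i : ℕ) < 4 * s then 0 else 1), fun i => ?_⟩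
  simp only [Pi.sub_apply, vns, wOdd, e1, hz]
  split_ifs <;> first | omega | (push_cast; ring)

theorem le_qns_vns_sub_wOdd_sub (hodd : Odd n) (h4s : 4 * s ≤ n + 1) {v : Fin (n + 1) → ℝ}
    (hv : ∀ i, ∃ m : ℤ, v i = m) :
    ((n : ℝ) + 1) / 4 ≤ qns n s (vns n s - wOdd n s - v) := by
  obtain ⟨m, hm⟩ := exists_int_vns_sub_wOdd_sub (s := s) hodd hv
  calc ((n : ℝ) + 1) / 4 = 2 * s * 0 + 2 * s * (1 / 2) + ((n : ℝ) + 1 - 4 * s) * (1 / 4) := by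
        ring
    _ ≤ _ := le_qns_of_le_blocks h4s fun i => by
      have := one_div_four_le_sq_int_add_half (m i)
      rw [hm i]
      split_ifs <;> first | omega | positivity | linarith

theorem le_qns_vns_sub_wOdd_sub_tns_sub (hodd : Odd n) (h4s : 4 * s ≤ n + 1)
    {v : Fin (n + 1) → ℝ} (hv : ∀ i, ∃ m : ℤ, v i = m) :
    ((n : ℝ) + 1) / 4 ≤ qns n s (vns n s - wOdd n s - tns n s - v) := by
  obtain ⟨m, hm⟩ := exists_int_vns_sub_wOdd_sub (s := s) hodd hv
  have hm' : ∀ i, (vns n s - wOdd n s - tns n s - v) i = (vns n s - wOdd n s - v) i - tns n s i :=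
    fun i => by simp only [Pi.sub_apply]; ring
  calc ((n : ℝ) + 1) / 4 = 2 * s * (1 / 2) + 2 * s * 0 + ((n : ℝ) + 1 - 4 * s) * (1 / 4) := by
        ring
    _ ≤ _ := le_qns_of_le_blocks h4s fun i => by
      have := one_div_four_le_sq_int_add_half (m i - 1)
      have := one_div_four_le_sq_int_add_half (m i)
      rw [hm', hm i, tns]
      push_cast at *
      split_ifs <;> first | omega | positivity | nlinarith

end Blocks

theorem coset_far_odd (n s : ℕ) (hodd : Odd n) (h4s : 4 * s ≤ n + 1) :
    (∀ v ∈ Vset n s,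
      ((n : ℝ) + 1) / 4 ≤ qns n s (vns n s - wOdd n s - v) ∧
      ((n : ℝ) + 1) / 4 ≤ qns n s (vns n s - wOdd n s - tns n s - v)) ∧
    (∀ u ∈ V2 n s, ((n : ℝ) + 1) / 4 ≤ qns n s (vns n s - (wOdd n s + u))) := by
  refine ⟨fun v hv => ⟨le_qns_vns_sub_wOdd_sub hodd h4s hv.1,
    le_qns_vns_sub_wOdd_sub_tns_sub hodd h4s hv.1⟩, ?_⟩
  rintro u (hu | ⟨v, hv, rfl⟩)
  · rw [sub_add_eq_sub_sub]
    exact le_qns_vns_sub_wOdd_sub hodd h4s hu.1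
  · rw [sub_add_eq_sub_sub, sub_add_eq_sub_sub]
    exact le_qns_vns_sub_wOdd_sub_tns_sub hodd h4s hv.1
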